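/- There exist a fixed piece-wise linear set Σ of TGDs and a fixed Boolean CQ q such that the problem of deciding, given a database D as input, whether () ∈ cert(q,D,Σ), is undecidable; hence conjunctive query answering under piece-wise linear sets of TGDs is undecidable already in data complexity. -/

import Mathlib

/-! ### Core: terms, atoms, TGDs, CQs, certain answers -/

/-- Terms: constants ⊕ nulls ⊕ variables (each indexed by a natural number). -/
abbrev Term' : Type := ℕ ⊕ ℕ ⊕ ℕ

/-- The constant `n`. -/
def Term'.cst (n : ℕ) : Term' := Sum.inl n
/-- The labeled null `n`. -/
def Term'.nul (n : ℕ) : Term' := Sum.inr (Sum.inl n)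
/-- The variable `n`. -/
def Term'.var (n : ℕ) : Term' := Sum.inr (Sum.inr n)

def Term'.isVarB : Term' → Bool
  | Sum.inr (Sum.inr _) => true
  | _ => false

def Term'.isConstB : Term' → Bool
  | Sum.inl _ => true
  | _ => false

def Term'.isNullB : Term' → Bool
  | Sum.inr (Sum.inl _) => true
  | _ => false

/-- A (relational) atom: a predicate symbol together with a list of argument terms. -/
abbrev Atom : Type := ℕ × List Term'

/-- Apply a substitution to an atom. -/
def mapAtom (h : Term' → Term') (a : Atom) : Atom := (a.1, a.2.map h)

/-- A substitution is the identity on constants. -/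
def constPres (h : Term' → Term') : Prop := ∀ n, h (Term'.cst n) = Term'.cst n

/-- The variable `v` occurs in the set of atoms `A`. -/
def occursIn (A : Finset Atom) (v : ℕ) : Prop := ∃ a ∈ A, Term'.var v ∈ a.2

/-- A fact is an atom that contains only constants. -/
def isFact (a : Atom) : Prop := ∀ t ∈ a.2, Term'.isConstB t = true

/-- A tuple-generating dependency (TGD) `body → ∃ z̄ head`; the existentially
quantified variables are exactly the head variables not occurring in the body. -/
structure TGD where
  body : Finset Atom
  head : Finset Atom
deriving DecidableEq

/-- A TGD is well-formed if its body and head contain only variables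
(no constants and no nulls). -/
def TGD.wf (σ : TGD) : Prop := ∀ a ∈ σ.body ∪ σ.head, ∀ t ∈ a.2, Term'.isVarB t = true

/-- `v` is an existentially quantified variable of `σ`. -/
def isExistVar (σ : TGD) (v : ℕ) : Prop := occursIn σ.head v ∧ ¬ occursIn σ.body v

/-- An instance `I` (a set of atoms) satisfies a TGD: every homomorphism of the body
into `I` extends (on the body variables, in particular on the frontier) to a
homomorphism of the head into `I`. -/
def satTGD (I : Set Atom) (σ : TGD) : Prop :=
  ∀ h : Term' → Term', constPres h → (∀ a ∈ σ.body, mapAtom h a ∈ I) →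
    ∃ h' : Term' → Term', constPres h' ∧
      (∀ v, occursIn σ.body v → h' (Term'.var v) = h (Term'.var v)) ∧
      (∀ a ∈ σ.head, mapAtom h' a ∈ I)

/-- A conjunctive query: a tuple of output terms and a finite set of body atoms. -/
structure CQ where
  output : List Term'
  atoms : Finset Atom
deriving DecidableEq

/-- Well-formed CQ: no nulls in the atoms, and the output tuple consists of variables. -/
def CQ.wf (q : CQ) : Prop :=
  (∀ a ∈ q.atoms, ∀ t ∈ a.2, Term'.isNullB t = false) ∧
  (∀ t ∈ q.output, Term'.isVarB t = true)

/-- The evaluation `q(I)` of a CQ over an instance: all tuples of constants obtained as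
homomorphic images of the output tuple. -/
def CQ.eval (q : CQ) (I : Set Atom) : Set (List ℕ) :=
  { c | ∃ h : Term' → Term', constPres h ∧ (∀ a ∈ q.atoms, mapAtom h a ∈ I) ∧
        q.output.map h = c.map Term'.cst }

/-- The certain answers to `q` w.r.t. the database `D` and the set `S` of TGDs. -/
def cert (q : CQ) (D : Finset Atom) (S : Finset TGD) : Set (List ℕ) :=
  { c | ∀ I : Set Atom, ↑D ⊆ I → (∀ σ ∈ S, satTGD I σ) → c ∈ q.eval I }

/-- The active domain of a database: all constants occurring in it. -/
def adom (D : Finset Atom) : Set ℕ := { n | ∃ a ∈ D, Term'.cst n ∈ a.2 }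

/-! ### Wardedness, piece-wise linearity, predicate levels -/

/-- The predicate `p` occurs in the set of atoms `A`. -/
def occursPredIn (A : Finset Atom) (p : ℕ) : Prop := ∃ a ∈ A, a.1 = p

/-- The affected positions of (the schema of) `S`: `Affected S p i` says that the
`i`-th position of predicate `p` is affected. -/
inductive Affected (S : Finset TGD) : ℕ → ℕ → Prop
  | base (σ : TGD) (hσ : σ ∈ S) (v : ℕ) (hv : isExistVar σ v)
      (a : Atom) (ha : a ∈ σ.head) (i : ℕ) (hi : a.2[i]? = some (Term'.var v)) :
      Affected S a.1 i
  | step (σ : TGD) (hσ : σ ∈ S) (v : ℕ)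
      (hb : occursIn σ.body v) (hh : occursIn σ.head v)
      (hall : ∀ b ∈ σ.body, ∀ j : ℕ, b.2[j]? = some (Term'.var v) → Affected S b.1 j)
      (a : Atom) (ha : a ∈ σ.head) (i : ℕ) (hi : a.2[i]? = some (Term'.var v)) :
      Affected S a.1 i

/-- A body variable of `σ` is harmless if at least one of its occurrences in the body
is at a non-affected position. -/
def harmless (S : Finset TGD) (σ : TGD) (v : ℕ) : Prop :=
  ∃ b ∈ σ.body, ∃ i : ℕ, b.2[i]? = some (Term'.var v) ∧ ¬ Affected S b.1 i

/-- A body variable is dangerous if it is harmful (not harmless) and is a frontier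
variable (it occurs in the head). -/
def dangerous (S : Finset TGD) (σ : TGD) (v : ℕ) : Prop :=
  occursIn σ.body v ∧ occursIn σ.head v ∧ ¬ harmless S σ v

/-- `S` is warded: each TGD either has no dangerous body variables, or has a body atom
(a ward) containing all dangerous variables and sharing only harmless variables with
the rest of the body. -/
def Warded (S : Finset TGD) : Prop :=
  ∀ σ ∈ S, (∀ v, ¬ dangerous S σ v) ∨
    ∃ α ∈ σ.body, (∀ v, dangerous S σ v → Term'.var v ∈ α.2) ∧
      (∀ v, Term'.var v ∈ α.2 → occursIn (σ.body.erase α) v → harmless S σ v)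

/-- Edge of the predicate graph of `S`. -/
def pgEdge (S : Finset TGD) (p r : ℕ) : Prop :=
  ∃ σ ∈ S, occursPredIn σ.body p ∧ occursPredIn σ.head r

/-- Two predicates are mutually recursive if they lie on a common cycle of the
predicate graph. -/
def mutRec (S : Finset TGD) (p r : ℕ) : Prop :=
  Relation.TransGen (pgEdge S) p r ∧ Relation.TransGen (pgEdge S) r p

/-- `S` is piece-wise linear: each TGD has at most one body atom whose predicate is
mutually recursive with a predicate of its head. -/
def PWL (S : Finset TGD) : Prop :=
  ∀ σ ∈ S, ∀ α ∈ σ.body, ∀ β ∈ σ.body,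
    (∃ γ ∈ σ.head, mutRec S α.1 γ.1) → (∃ γ ∈ σ.head, mutRec S β.1 γ.1) → α = β

/-- Every TGD of `S` has exactly one head atom. -/
def singleHead (S : Finset TGD) : Prop := ∀ σ ∈ S, σ.head.card = 1

/-- The predicates occurring in `S` (as a set). -/
def schP (S : Finset TGD) : Set ℕ :=
  { p | ∃ σ ∈ S, occursPredIn σ.body p ∨ occursPredIn σ.head p }

/-- The predicates occurring in `S` (as a finite set). -/
def schF (S : Finset TGD) : Finset ℕ :=
  S.sup (fun σ => (σ.body ∪ σ.head).image (fun a => a.1))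

/-- `lvl` is the (unique) level function of `S`:
`lvl p = max { lvl r | (r,p) an edge of the predicate graph, r not mutually recursive
with p } + 1` (with `max ∅ = 0`). -/
def IsLevelFn (S : Finset TGD) (lvl : ℕ → ℕ) : Prop :=
  ∀ p ∈ schP S,
    (∀ r, pgEdge S r p → ¬ mutRec S r p → lvl r < lvl p) ∧
    (lvl p = 1 ∨ ∃ r, pgEdge S r p ∧ ¬ mutRec S r p ∧ lvl p = lvl r + 1)

/-- The maximal body size of a TGD of `S`. -/
def maxBody (S : Finset TGD) : ℕ := S.sup (fun σ => σ.body.card)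

/-- `f_{WARD∩PWL}(n, S) = (n+1) · max_{P ∈ sch(S)} level(P) · max_{σ ∈ S} |body(σ)|`,
where `n` is the number of atoms of the CQ (resp. the cardinality of the atom set). -/
def fWardPwl (n : ℕ) (S : Finset TGD) (lvl : ℕ → ℕ) : ℕ :=
  (n + 1) * (schF S).sup lvl * maxBody S

/-- `f_{WARD}(n, S) = 2 · max (n, max_{σ ∈ S} |body(σ)|)`. -/
def fWard (n : ℕ) (S : Finset TGD) : ℕ := 2 * max n (maxBody S)


/-!
Reduction from the halting problem. Mathlib compiles every partial recursive function into a
machine with four stacks over a four-letter alphabet (`Turing.PartrecToTM2`); take the one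
running the `e`-th code on `0` when given the input `2 ^ e - 1`, whose binary digits form a
word of length `e`. Executed one statement constructor at a time, the machine has finitely
many control states and each step reads or writes at most the top of one stack. A
configuration becomes an atom over a predicate for its control state whose four arguments are
nodes of a tree of stacks: the rules `node(x) → ∃y. edge_s(x, y) ∧ node(y)` supply the
successor of every stack under every push, and each step of the machine is a rule whose body is
the configuration atom plus at most one root or edge atom of that tree. Only the configuration
predicates are mutually recursive with the head of a step rule, so the rules are piece-wise
linear. The database spells the input as a chain of edges from a root. If the machine halts,
every model contains the image of the run, hence the atom `halt`; if it does not halt, the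
full tree of stacks together with the reachable configurations is a model without it.
-/

namespace PwlUndecidable

open Turing Turing.PartrecToTM2 StateTransition

def homOf (g : ℕ → Term') : Term' → Term'
  | Sum.inr (Sum.inr n) => g n
  | t => t

theorem constPres_homOf (g : ℕ → Term') : constPres (homOf g) := fun _ => rfl

@[simp] theorem homOf_var (g : ℕ → Term') (n : ℕ) : homOf g (Term'.var n) = g n := rfl

theorem satTGD.mapAtom_head_mem {I : Set Atom} {σ : TGD} (hsat : satTGD I σ)
    (hfull : ∀ a ∈ σ.head, ∀ u ∈ a.2, ∃ v, u = Term'.var v ∧ occursIn σ.body v)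
    {h : Term' → Term'} (hc : constPres h) (hb : ∀ a ∈ σ.body, mapAtom h a ∈ I) :
    ∀ a ∈ σ.head, mapAtom h a ∈ I := by
  obtain ⟨h', -, hagree, hhead⟩ := hsat h hc hb
  intro a ha
  have hmap : a.2.map h = a.2.map h' := List.map_congr_left fun u hu => by
    obtain ⟨v, rfl, hv⟩ := hfull a ha u hu
    exact (hagree v hv).symm
  simpa only [mapAtom, hmap] using hhead a ha

/-! ### The universal machine -/

/-- Inverts `e ↦ 2 ^ e - 1`, whose binary expansion is `e` ones: the input selecting the `e`-th
code is then written by a database of size linear in `e`. -/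
def codeIndex (m : ℕ) : ℕ := Nat.findGreatest (fun i => 2 ^ i ≤ m + 1) m

theorem codeIndex_two_pow_sub_one (e : ℕ) : codeIndex (2 ^ e - 1) = e := by
  have he : e < 2 ^ e := Nat.lt_two_pow_self
  refine Nat.findGreatest_eq_iff.2 ⟨by omega, fun _ => by omega, fun n hn _ hle => ?_⟩
  have := Nat.pow_lt_pow_right (by norm_num : 1 < 2) hn
  omega

theorem codeIndex_primrec : Primrec codeIndex :=
  Primrec.nat_findGreatest Primrec.id <| Primrec.nat_le.comp
    ((Primrec₂.unpaired'.1 Nat.Primrec.pow).comp (Primrec.const 2) Primrec.snd)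
    (Primrec.succ.comp Primrec.fst)

def universal (v : List.Vector ℕ 1) : Part ℕ :=
  (Denumerable.ofNat Nat.Partrec.Code (codeIndex v.head)).eval 0

theorem universal_partrec : Partrec universal :=
  Nat.Partrec.Code.eval_part.comp
    ((Computable.ofNat _).comp (codeIndex_primrec.to_comp.comp Computable.vector_head))
    (Computable.const 0)

theorem exists_universalCode :
    ∃ c : ToPartrec.Code, ∀ v, c.eval v.1 = pure <$> universal v :=
  ToPartrec.Code.exists_code (Nat.Partrec'.of_part universal_partrec)

noncomputable def universalCode : ToPartrec.Code := exists_universalCode.choose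

theorem universalCode_halts_iff (e : ℕ) :
    (eval (TM2.step tr) (init universalCode [2 ^ e - 1])).Dom ↔
      ((Denumerable.ofNat Nat.Partrec.Code e).eval 0).Dom := by
  have h : universalCode.eval [2 ^ e - 1] = pure <$> universal ⟨[2 ^ e - 1], rfl⟩ :=
    exists_universalCode.choose_spec ⟨[2 ^ e - 1], rfl⟩
  rw [PartrecToTM2.tr_eval, h]
  simp [universal, List.Vector.head, codeIndex_two_pow_sub_one]

abbrev Stmt₂ : Type := TM2.Stmt (fun _ : K' => Γ') Λ' (Option Γ')

noncomputable local instance : DecidableEq Stmt₂ := Classical.decEq _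

noncomputable def labels : Finset Λ' := codeSupp universalCode Cont'.halt

noncomputable def initLabel : Λ' := trNormal universalCode Cont'.halt

theorem initLabel_mem : initLabel ∈ labels := (tr_supports universalCode Cont'.halt).1

noncomputable def machineStmts : Finset Stmt₂ :=
  labels.biUnion fun l => TM2.stmts₁ (tr l : Stmt₂)

theorem tr_mem_machineStmts {l : Λ'} (h : l ∈ labels) : tr l ∈ machineStmts :=
  Finset.mem_biUnion (β := Stmt₂) |>.2 ⟨l, h, TM2.stmts₁_self⟩

theorem mem_machineStmts_of_mem_stmts₁ {q q' : Stmt₂} (h : q ∈ machineStmts)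
    (h' : q' ∈ TM2.stmts₁ q) : q' ∈ machineStmts := by
  obtain ⟨l, hl, hq⟩ := Finset.mem_biUnion.1 h
  exact Finset.mem_biUnion.2 ⟨l, hl, TM2.stmts₁_trans hq h'⟩

theorem supportsStmt_of_mem_machineStmts {q : Stmt₂} (h : q ∈ machineStmts) :
    TM2.SupportsStmt labels q := by
  obtain ⟨l, hl, hq⟩ := Finset.mem_biUnion.1 h
  exact TM2.stmts₁_supportsStmt_mono hq ((tr_supports universalCode Cont'.halt).2 l hl)

/-! ### Micro-steps -/

/-- The statement still to be executed, and the value of the local variable. -/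
abbrev Ctrl : Type := Stmt₂ × Option Γ'

/-- Configurations of the machine that executes one statement constructor per step. -/
abbrev MicroCfg : Type := Ctrl × (K' → List Γ')

def microStep : MicroCfg → Option MicroCfg
  | ((.push k f q, v), S) => some ((q, v), Function.update S k (f v :: S k))
  | ((.peek k f q, v), S) => some ((q, f v (S k).head?), S)
  | ((.pop k f q, v), S) => some ((q, f v (S k).head?), Function.update S k (S k).tail)
  | ((.load a q, v), S) => some ((q, a v), S)
  | ((.branch p q₁ q₂, v), S) => some ((cond (p v) q₁ q₂, v), S)
  | ((.goto f, v), S) => some ((tr (f v), v), S)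
  | ((.halt, _), _) => none

def toMicroCfg (c : TM2.Cfg (fun _ : K' => Γ') Λ' (Option Γ')) : MicroCfg :=
  ((c.l.elim .halt tr, c.var), c.stk)

def runStmt (m : MicroCfg) : TM2.Cfg (fun _ : K' => Γ') Λ' (Option Γ') :=
  TM2.stepAux m.1.1 m.1.2 m.2

theorem reaches_toMicroCfg_stepAux (q : Stmt₂) (v : Option Γ') (S : K' → List Γ') :
    Reaches microStep ((q, v), S) (toMicroCfg (TM2.stepAux q v S)) := by
  induction q generalizing v S with
  | push _ _ _ ih | peek _ _ _ ih | pop _ _ _ ih | load _ _ ih =>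
    exact .head rfl (ih _ _)
  | branch p q₁ q₂ ih₁ ih₂ =>
    refine .head rfl ?_
    rw [TM2.stepAux.eq_5]
    cases p v
    exacts [ih₂ v S, ih₁ v S]
  | goto f => exact .single rfl
  | halt => exact .refl

theorem reaches_toMicroCfg_of_step {c c' : TM2.Cfg (fun _ : K' => Γ') Λ' (Option Γ')}
    (h : TM2.step tr c = some c') : Reaches microStep (toMicroCfg c) (toMicroCfg c') := by
  obtain ⟨_ | l, v, S⟩ := c
  · cases h
  · cases h
    exact reaches_toMicroCfg_stepAux (tr l) v S

theorem reaches_runStmt_of_microStep {m m' : MicroCfg} (h : microStep m = some m') :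
    Reaches (TM2.step tr) (runStmt m) (runStmt m') := by
  obtain ⟨⟨q, v⟩, S⟩ := m
  cases q <;> cases h
  case branch p q₁ q₂ =>
    simp only [runStmt, TM2.stepAux.eq_5]
    cases p v <;> exact .refl
  case goto f => exact .single rfl
  all_goals exact .refl

theorem eval_dom_of_reaches_halt {m : MicroCfg} {v : Option Γ'} {S : K' → List Γ'}
    (h : Reaches microStep m ((.halt, v), S)) : (eval (TM2.step tr) (runStmt m)).Dom := by
  induction h using Relation.ReflTransGen.head_induction_on with
  | refl => exact Part.dom_iff_mem.2 ⟨_, mem_eval.2 ⟨.refl, rfl⟩⟩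
  | head hstep _ ih => rwa [reaches_eval (reaches_runStmt_of_microStep hstep)]

theorem eval_dom_iff_reaches_halt (l : Λ') (v : Option Γ') (S : K' → List Γ') :
    (eval (TM2.step tr) ⟨some l, v, S⟩).Dom ↔
      ∃ v' S', Reaches microStep ((tr l, v), S) ((.halt, v'), S') := by
  constructor
  · intro h
    obtain ⟨b, hb⟩ := Part.dom_iff_mem.1 h
    obtain ⟨hreach, hstop⟩ := mem_eval.1 hb
    obtain ⟨_ | _, v', S'⟩ := b
    · exact ⟨v', S', Relation.ReflTransGen.lift' toMicroCfg
        (fun _ _ h => reaches_toMicroCfg_of_step h) _ _ hreach⟩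
    · cases hstop
  · rintro ⟨v', S', h⟩
    have hstep : TM2.stepAux (tr l) v S ∈ TM2.step tr ⟨some l, v, S⟩ := rfl
    rw [reaches_eval (.single hstep)]
    exact eval_dom_of_reaches_halt h

/-- The access of a micro-step to the stacks; `isEmpty` and `top` are tests, and `top k s true`
also pops. -/
inductive StackOp
  | skip
  | push (k : K') (s : Γ')
  | isEmpty (k : K')
  | top (k : K') (s : Γ') (pop : Bool)
  deriving DecidableEq

def StackOp.apply : StackOp → (K' → List Γ') → Option (K' → List Γ')
  | skip, S => some S
  | push k s, S => some (Function.update S k (s :: S k))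
  | isEmpty k, S => if S k = [] then some S else none
  | top k s pop, S =>
    if (S k).head? = some s then some (if pop then Function.update S k (S k).tail else S)
    else none

/-- The micro-step from a control state, split into one move per outcome of its test. -/
noncomputable def moves : Ctrl → Finset (StackOp × Ctrl)
  | (.push k f q, v) => {(.push k (f v), q, v)}
  | (.peek k f q, v) =>
    insert (.isEmpty k, q, f v none) (Finset.univ.image fun s => (.top k s false, q, f v (some s)))
  | (.pop k f q, v) =>
    insert (.isEmpty k, q, f v none) (Finset.univ.image fun s => (.top k s true, q, f v (some s)))
  | (.load a q, v) => {(.skip, q, a v)}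
  | (.branch p q₁ q₂, v) => {(.skip, cond (p v) q₁ q₂, v)}
  | (.goto f, v) => {(.skip, ((tr (f v), v) : Ctrl))}
  | (.halt, _) => ∅

theorem microStep_eq_some_iff {x y : Ctrl} {S S' : K' → List Γ'} :
    microStep (x, S) = some (y, S') ↔ ∃ o ∈ moves x, o.2 = y ∧ o.1.apply S = some S' := by
  obtain ⟨q, v⟩ := x
  cases q
  case peek k f q => cases hS : S k <;> simp [microStep, moves, StackOp.apply, eq_comm, hS]
  case pop k f q =>
    cases hS : S k
    · have hpop : Function.update S k [] = S := by
        rw [← hS]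
        exact Function.update_eq_self k S
      simp [microStep, moves, StackOp.apply, eq_comm, hS, hpop]
    · simp [microStep, moves, StackOp.apply, eq_comm, hS]
  all_goals simp [microStep, moves, StackOp.apply, eq_comm]

theorem fst_mem_machineStmts_of_mem_moves {x : Ctrl} {o : StackOp × Ctrl}
    (hx : x.1 ∈ machineStmts) (ho : o ∈ moves x) : o.2.1 ∈ machineStmts := by
  obtain ⟨q, v⟩ := x
  have hsub : ∀ q', q' ∈ TM2.stmts₁ q → q' ∈ machineStmts :=
    fun _ => mem_machineStmts_of_mem_stmts₁ hx
  cases q <;> simp only [moves, Finset.mem_singleton, Finset.mem_insert, Finset.mem_image,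
    Finset.mem_univ, true_and, Finset.notMem_empty] at ho
  case push | load =>
    subst ho
    exact hsub _ (by simp [TM2.stmts₁, TM2.stmts₁_self])
  case peek | pop =>
    rcases ho with rfl | ⟨_, rfl⟩ <;> exact hsub _ (by simp [TM2.stmts₁, TM2.stmts₁_self])
  case branch p q₁ q₂ =>
    subst ho
    exact hsub _ (by cases p v <;> simp [TM2.stmts₁, TM2.stmts₁_self])
  case goto f =>
    subst ho
    exact tr_mem_machineStmts (supportsStmt_of_mem_machineStmts hx v)

def chainSym (i : ℕ) : Γ' := if i = 0 then .cons else .bit1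

/-- The stacks spelled by the chain of the database. -/
def chainWord : ℕ → List Γ'
  | 0 => []
  | i + 1 => chainSym i :: chainWord i

theorem length_chainWord (i : ℕ) : (chainWord i).length = i := by
  induction i with
  | zero => rfl
  | succ i ih => simp [chainWord, ih]

theorem trNum_bit1 (n : Num) : trNum n.bit1 = Γ'.bit1 :: trNum n := by
  cases n <;> rfl

theorem trNat_two_mul_add_one (n : ℕ) : trNat (2 * n + 1) = Γ'.bit1 :: trNat n := by
  rw [trNat, trNat, ← trNum_bit1, ← Num.bit1_of_bit1]
  push_cast
  ring_nf

theorem trList_two_pow_sub_one (e : ℕ) : trList [2 ^ e - 1] = chainWord (e + 1) := by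
  induction e with
  | zero => simp [chainWord, chainSym]
  | succ e ih =>
    have h : 2 ^ (e + 1) - 1 = 2 * (2 ^ e - 1) + 1 := by
      have := Nat.one_le_two_pow (n := e)
      rw [pow_succ]
      omega
    simp only [trList, h, trNat_two_mul_add_one] at ih ⊢
    rw [chainWord, ← ih]
    simp [chainSym]

noncomputable def initCtrl : Ctrl := (tr initLabel, none)

noncomputable def initCfg (e : ℕ) : MicroCfg := (initCtrl, K'.elim (chainWord (e + 1)) [] [] [])

theorem exists_reaches_halt_iff (e : ℕ) :
    (∃ v S, Reaches microStep (initCfg e) ((.halt, v), S)) ↔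
      ((Denumerable.ofNat Nat.Partrec.Code e).eval 0).Dom := by
  rw [← universalCode_halts_iff, init, trList_two_pow_sub_one]
  exact (eval_dom_iff_reaches_halt _ _ _).symm

/-! ### The rules and the database -/

def symCode : Γ' → ℕ
  | .consₗ => 0
  | .cons => 1
  | .bit0 => 2
  | .bit1 => 3

theorem symCode_injective : Function.Injective symCode := by
  intro a b h
  cases a <;> cases b <;> first | rfl | simp [symCode] at h

def haltP : ℕ := 0
def rootP : ℕ := 1
def nodeP : ℕ := 2
def edgeP (s : Γ') : ℕ := 3 + symCode s

theorem edgeP_mem_Icc (s : Γ') : edgeP s ∈ Set.Icc 3 6 := by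
  cases s <;> simp [edgeP, symCode]

noncomputable def ctrls : Finset Ctrl := machineStmts ×ˢ Finset.univ

theorem mem_ctrls {x : Ctrl} : x ∈ ctrls ↔ x.1 ∈ machineStmts := by
  simp [ctrls]

/-- Injective only on `ctrls`, which contains every control state occurring in a rule. -/
noncomputable def ctrlPred (x : Ctrl) : ℕ :=
  if h : x ∈ ctrls then 7 + ctrls.equivFin ⟨x, h⟩ else 7

theorem seven_le_ctrlPred (x : Ctrl) : 7 ≤ ctrlPred x := by
  unfold ctrlPred
  split <;> omega

theorem ctrlPred_injOn : Set.InjOn ctrlPred ctrls := by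
  intro x hx y hy h
  rw [Finset.mem_coe] at hx hy
  rw [ctrlPred, ctrlPred, dif_pos hx, dif_pos hy, Nat.add_left_cancel_iff, Fin.val_inj] at h
  exact congrArg Subtype.val (ctrls.equivFin.injective h)

def stackIdx : K' → ℕ
  | .main => 0
  | .rev => 1
  | .aux => 2
  | .stack => 3

/-- The variable for the tree node representing stack `k`. -/
def ptrVar (k : K') : Term' := Term'.var (stackIdx k)

def auxVar : Term' := Term'.var 4

/-- The machine is in control state `x`, and stack `k` is represented by the node `t k`. -/
noncomputable def confAtom (x : Ctrl) (t : K' → Term') : Atom :=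
  (ctrlPred x, [t .main, t .rev, t .aux, t .stack])

theorem mem_confAtom {x : Ctrl} {t : K' → Term'} {u : Term'} :
    u ∈ (confAtom x t).2 ↔ ∃ j, t j = u := by
  constructor
  · simp only [confAtom, List.mem_cons, List.not_mem_nil, or_false]
    rintro (rfl | rfl | rfl | rfl) <;> exact ⟨_, rfl⟩
  · rintro ⟨j, rfl⟩
    cases j <;> simp [confAtom]

theorem mapAtom_confAtom (h : Term' → Term') (x : Ctrl) (t : K' → Term') :
    mapAtom h (confAtom x t) = confAtom x (h ∘ t) := rfl

namespace StackOp

/-- The body atoms of the rule of a move besides its configuration atom. -/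
def guard : StackOp → Finset Atom
  | skip => ∅
  | push k s => {(edgeP s, [ptrVar k, auxVar])}
  | isEmpty k => {(rootP, [ptrVar k])}
  | top k s _ => {(edgeP s, [auxVar, ptrVar k])}

/-- The variables for the nodes representing the stacks after the move. -/
def newPtr : StackOp → K' → Term'
  | push k _ => Function.update ptrVar k auxVar
  | top k _ true => Function.update ptrVar k auxVar
  | _ => ptrVar

theorem newPtr_eq (o : StackOp) (j : K') :
    o.newPtr j = ptrVar j ∨ (o.newPtr j = auxVar ∧ ∃ a ∈ o.guard, auxVar ∈ a.2) := by
  rcases o with _ | ⟨k, s⟩ | k | ⟨k, s, _ | _⟩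
  all_goals
    first
    | exact Or.inl rfl
    | rcases eq_or_ne j k with rfl | hj
      · exact Or.inr ⟨by simp [newPtr], by simp [guard]⟩
      · exact Or.inl (Function.update_of_ne hj _ _)

theorem isVarB_newPtr (o : StackOp) (j : K') : (o.newPtr j).isVarB = true := by
  rcases o.newPtr_eq j with h | ⟨h, -⟩ <;> rw [h] <;> rfl

theorem isVarB_of_mem_guard {o : StackOp} {a : Atom} (ha : a ∈ o.guard) :
    ∀ u ∈ a.2, u.isVarB = true := by
  cases o <;> simp only [guard, Finset.mem_singleton, Finset.notMem_empty] at ha <;>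
    subst ha <;> simp [ptrVar, auxVar, Term'.var, Term'.isVarB]

end StackOp

def treeRule (s : Γ') : TGD :=
  ⟨{(nodeP, [Term'.var 0])}, {(edgeP s, [Term'.var 0, Term'.var 1]), (nodeP, [Term'.var 1])}⟩

noncomputable def haltRule (x : Ctrl) : TGD :=
  ⟨{confAtom x ptrVar}, {(haltP, [])}⟩

noncomputable def moveRule (x : Ctrl) (o : StackOp × Ctrl) : TGD :=
  ⟨insert (confAtom x ptrVar) o.1.guard, {confAtom o.2 o.1.newPtr}⟩

noncomputable def rules : Finset TGD :=
  Finset.univ.image treeRule ∪ ((ctrls.filter fun x => x.1 = .halt).image haltRule ∪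
    ctrls.biUnion fun x => (moves x).image (moveRule x))

def haltQuery : CQ := ⟨[], {(haltP, [])}⟩

theorem mem_rules {σ : TGD} :
    σ ∈ rules ↔ (∃ s, treeRule s = σ) ∨
      (∃ x ∈ ctrls, x.1 = .halt ∧ haltRule x = σ) ∨
      ∃ x ∈ ctrls, ∃ o ∈ moves x, moveRule x o = σ := by
  simp [rules, and_assoc]

theorem treeRule_mem_rules (s : Γ') : treeRule s ∈ rules :=
  mem_rules.2 (Or.inl ⟨s, rfl⟩)

theorem haltRule_mem_rules {x : Ctrl} (hx : x ∈ ctrls) (hhalt : x.1 = .halt) :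
    haltRule x ∈ rules :=
  mem_rules.2 (Or.inr (Or.inl ⟨x, hx, hhalt, rfl⟩))

theorem moveRule_mem_rules {x : Ctrl} {o : StackOp × Ctrl} (hx : x ∈ ctrls)
    (ho : o ∈ moves x) : moveRule x o ∈ rules :=
  mem_rules.2 (Or.inr (Or.inr ⟨x, hx, o, ho, rfl⟩))

theorem moveRule_head_vars (x : Ctrl) (o : StackOp × Ctrl) :
    ∀ a ∈ (moveRule x o).head, ∀ u ∈ a.2,
      ∃ v, u = Term'.var v ∧ occursIn (moveRule x o).body v := by
  intro a ha u hu
  simp only [moveRule, Finset.mem_singleton] at ha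
  subst ha
  obtain ⟨j, rfl⟩ := mem_confAtom.1 hu
  rcases o.1.newPtr_eq j with h | ⟨h, a, ha, hmem⟩ <;> rw [h]
  · exact ⟨stackIdx j, rfl, _, Finset.mem_insert_self _ _, mem_confAtom.2 ⟨j, rfl⟩⟩
  · exact ⟨4, rfl, a, Finset.mem_insert_of_mem ha, hmem⟩

theorem isVarB_of_mem_confAtom {x : Ctrl} {t : K' → Term'} (ht : ∀ j, (t j).isVarB = true)
    {u : Term'} (hu : u ∈ (confAtom x t).2) : u.isVarB = true := by
  obtain ⟨j, rfl⟩ := mem_confAtom.1 hu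
  exact ht j

theorem rules_wf : ∀ σ ∈ rules, σ.wf := by
  intro σ hσ
  rcases mem_rules.1 hσ with ⟨s, rfl⟩ | ⟨x, -, -, rfl⟩ | ⟨x, -, o, -, rfl⟩ <;>
    intro a ha u hu
  · simp only [treeRule, Finset.mem_union, Finset.mem_insert, Finset.mem_singleton] at ha
    rcases ha with rfl | rfl | rfl <;> simp at hu <;> rcases hu with rfl | rfl <;> rfl
  · simp only [haltRule, Finset.mem_union, Finset.mem_singleton] at ha
    rcases ha with rfl | rfl
    · exact isVarB_of_mem_confAtom (fun _ => rfl) hu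
    · simp at hu
  · simp only [moveRule, Finset.mem_union, Finset.mem_insert, Finset.mem_singleton] at ha
    rcases ha with (rfl | ha) | rfl
    · exact isVarB_of_mem_confAtom (fun _ => rfl) hu
    · exact StackOp.isVarB_of_mem_guard ha u hu
    · exact isVarB_of_mem_confAtom o.1.isVarB_newPtr hu

theorem haltQuery_wf : haltQuery.wf :=
  ⟨by simp [haltQuery], by simp [haltQuery]⟩

/-- The chain nodes are the constants `0, …, e + 1`; the input is stored at `e + 1`. -/
def initPtr (e : ℕ) : K' → Term'
  | .main => Term'.cst (e + 1)
  | _ => Term'.cst 0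

noncomputable def database (e : ℕ) : List Atom :=
  (rootP, [Term'.cst 0]) :: (nodeP, [Term'.cst 0]) :: confAtom initCtrl (initPtr e) ::
    (List.range (e + 1)).flatMap fun i =>
      [(edgeP (chainSym i), [Term'.cst i, Term'.cst (i + 1)]), (nodeP, [Term'.cst (i + 1)])]

theorem database_isFact (e : ℕ) : ∀ a ∈ database e, isFact a := by
  intro a ha
  simp only [database, List.mem_cons, List.mem_flatMap, List.mem_range, List.not_mem_nil,
    or_false] at ha
  rcases ha with rfl | rfl | rfl | ⟨i, -, rfl | rfl⟩ <;> intro u hu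
  all_goals first
    | (obtain ⟨j, rfl⟩ := mem_confAtom.1 hu; cases j <;> rfl)
    | (simp only [List.mem_cons, List.not_mem_nil, or_false] at hu
       rcases hu with rfl | rfl <;> rfl)

theorem database_primrec : Primrec database := by
  have hcst : Primrec Term'.cst := Primrec.sumInl
  have hnext : Primrec fun i => Term'.cst (i + 1) := hcst.comp Primrec.succ
  have hsym : Primrec fun i => edgeP (chainSym i) :=
    (Primrec.ite (Primrec.eq.comp Primrec.id (Primrec.const 0)) (Primrec.const 4)
      (Primrec.const 6)).of_eq fun i => by
        by_cases h : i = 0 <;> simp [h, chainSym, edgeP, symCode]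
  have hlink : Primrec fun i => ([(edgeP (chainSym i), [Term'.cst i, Term'.cst (i + 1)]),
      (nodeP, [Term'.cst (i + 1)])] : List Atom) :=
    Primrec.list_cons.comp
      (hsym.pair (Primrec.list_cons.comp hcst (Primrec.list_cons.comp hnext (Primrec.const []))))
      (Primrec.list_cons.comp
        ((Primrec.const nodeP).pair (Primrec.list_cons.comp hnext (Primrec.const [])))
        (Primrec.const []))
  have hconf : Primrec fun e => confAtom initCtrl (initPtr e) :=
    (Primrec.const _).pair
      (Primrec.list_cons.comp hnext (Primrec.const [Term'.cst 0, Term'.cst 0, Term'.cst 0]))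
  exact Primrec.list_cons.comp (Primrec.const _) <| Primrec.list_cons.comp (Primrec.const _) <|
    Primrec.list_cons.comp hconf <|
      Primrec.list_flatMap (Primrec.list_range.comp Primrec.succ) (hlink.comp Primrec.snd).to₂

/-! ### Piece-wise linearity -/

/-- The predicates reachable in the predicate graph from the head of a non-tree rule. -/
def IsCtrlPred (p : ℕ) : Prop := p = haltP ∨ 7 ≤ p

theorem StackOp.not_isCtrlPred_of_mem_guard {o : StackOp} {a : Atom} (ha : a ∈ o.guard) :
    ¬ IsCtrlPred a.1 := by
  cases o <;> simp only [guard, Finset.mem_singleton, Finset.notMem_empty] at ha <;> subst ha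
  case isEmpty => simp [IsCtrlPred, rootP, haltP]
  all_goals have := edgeP_mem_Icc ‹Γ'›; simp only [IsCtrlPred, haltP, Set.mem_Icc] at *; omega

theorem isCtrlPred_of_pgEdge {p r : ℕ} (h : pgEdge rules p r) (hp : IsCtrlPred p) :
    IsCtrlPred r := by
  obtain ⟨σ, hσ, ⟨a, ha, rfl⟩, ⟨b, hb, rfl⟩⟩ := h
  rcases mem_rules.1 hσ with ⟨s, rfl⟩ | ⟨x, -, -, rfl⟩ | ⟨x, -, o, -, rfl⟩
  · simp only [treeRule, Finset.mem_singleton] at ha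
    subst ha
    simp [IsCtrlPred, nodeP, haltP] at hp
  · simp only [haltRule, Finset.mem_singleton] at hb
    subst hb
    exact Or.inl rfl
  · simp only [moveRule, Finset.mem_singleton] at hb
    subst hb
    exact Or.inr (seven_le_ctrlPred _)

theorem isCtrlPred_of_transGen {p r : ℕ} (h : Relation.TransGen (pgEdge rules) p r)
    (hp : IsCtrlPred p) : IsCtrlPred r := by
  induction h with
  | single h => exact isCtrlPred_of_pgEdge h hp
  | tail _ h ih => exact isCtrlPred_of_pgEdge h ih

theorem rules_pwl : PWL rules := by
  intro σ hσ α hα β hβ hαr hβr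
  rcases mem_rules.1 hσ with ⟨s, rfl⟩ | ⟨x, -, -, rfl⟩ | ⟨x, -, o, -, rfl⟩
  · simp only [treeRule, Finset.mem_singleton] at hα hβ
    rw [hα, hβ]
  · simp only [haltRule, Finset.mem_singleton] at hα hβ
    rw [hα, hβ]
  · have hconf : ∀ a ∈ (moveRule x o).body,
        (∃ γ ∈ (moveRule x o).head, mutRec rules a.1 γ.1) → a = confAtom x ptrVar := by
      rintro a ha ⟨γ, hγ, -, hγa⟩
      simp only [moveRule, Finset.mem_singleton] at hγ
      subst hγ
      have hctrl := isCtrlPred_of_transGen hγa (Or.inr (seven_le_ctrlPred _))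
      rcases Finset.mem_insert.1 ha with h | h
      · exact h
      · exact absurd hctrl (StackOp.not_isCtrlPred_of_mem_guard h)
    rw [hconf α hα hαr, hconf β hβ hβr]

/-! ### Halting runs force the halting atom -/

/-- Sends `ptrVar k` to `t k` and `auxVar` to `u`. -/
def ptrVal (t : K' → Term') (u : Term') : ℕ → Term'
  | 0 => t .main
  | 1 => t .rev
  | 2 => t .aux
  | 3 => t .stack
  | _ => u

@[simp] theorem homOf_ptrVal_ptrVar (t : K' → Term') (u : Term') (j : K') :
    homOf (ptrVal t u) (ptrVar j) = t j := by
  cases j <;> rfl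

@[simp] theorem homOf_ptrVal_auxVar (t : K' → Term') (u : Term') :
    homOf (ptrVal t u) auxVar = u := rfl

@[simp] theorem mapAtom_confAtom_ptrVar (t : K' → Term') (u : Term') (x : Ctrl) :
    mapAtom (homOf (ptrVal t u)) (confAtom x ptrVar) = confAtom x t := by
  simp [confAtom, mapAtom]

/-- In `I`, a path from a root to the node `t` spells `w` backwards: `t` represents a stack
with content `w`, top first. -/
def Represents (I : Set Atom) : List Γ' → Term' → Prop
  | [], t => (rootP, [t]) ∈ I ∧ (nodeP, [t]) ∈ I
  | s :: w, t => (nodeP, [t]) ∈ I ∧ ∃ t', (edgeP s, [t', t]) ∈ I ∧ Represents I w t'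

theorem Represents.node_mem {I : Set Atom} {w : List Γ'} {t : Term'} (h : Represents I w t) :
    (nodeP, [t]) ∈ I := by
  cases w
  exacts [h.2, h.1]

theorem Represents.push {I : Set Atom} (htree : ∀ s, satTGD I (treeRule s)) {w : List Γ'}
    {t : Term'} (h : Represents I w t) (s : Γ') :
    ∃ u, (edgeP s, [t, u]) ∈ I ∧ Represents I (s :: w) u := by
  obtain ⟨h', -, hagree, hhead⟩ := htree s (homOf fun _ => t) (constPres_homOf _)
    (by simpa [treeRule, mapAtom] using h.node_mem)
  have h0 : h' (Term'.var 0) = t :=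
    hagree 0 ⟨_, Finset.mem_singleton_self _, List.mem_singleton_self _⟩
  have hedge := hhead (edgeP s, [Term'.var 0, Term'.var 1]) (by simp [treeRule])
  have hnode := hhead (nodeP, [Term'.var 1]) (by simp [treeRule])
  simp only [mapAtom, List.map_cons, List.map_nil, h0] at hedge hnode
  exact ⟨_, hedge, hnode, t, hedge, h⟩

theorem represents_update {I : Set Atom} {S : K' → List Γ'} {t : K' → Term'} {k : K'}
    {w : List Γ'} {u : Term'} (hS : ∀ j, Represents I (S j) (t j)) (hw : Represents I w u)
    (j : K') :
    Represents I (Function.update S k w j)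
      (homOf (ptrVal t u) (Function.update ptrVar k auxVar j)) := by
  rcases eq_or_ne j k with rfl | hj
  · simpa using hw
  · simpa [Function.update_of_ne hj] using hS j

theorem represents_chainWord {I : Set Atom} {e : ℕ} (hD : ∀ a ∈ database e, a ∈ I) {i : ℕ}
    (hi : i ≤ e + 1) : Represents I (chainWord i) (Term'.cst i) := by
  induction i with
  | zero => exact ⟨hD _ (by simp [database]), hD _ (by simp [database])⟩
  | succ i ih =>
    have hchain : ∀ a ∈ [(edgeP (chainSym i), [Term'.cst i, Term'.cst (i + 1)]),
        (nodeP, [Term'.cst (i + 1)])], a ∈ I := fun a ha =>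
      hD a (by
        rw [database, List.mem_cons, List.mem_cons, List.mem_cons, List.mem_flatMap]
        exact Or.inr (Or.inr (Or.inr ⟨i, List.mem_range.2 (by omega), ha⟩)))
    exact ⟨hchain _ (by simp), _, hchain _ (by simp), ih (by omega)⟩

theorem StackOp.exists_guard_mem {I : Set Atom} (htree : ∀ s, satTGD I (treeRule s))
    {o : StackOp} {S S' : K' → List Γ'} (ho : o.apply S = some S') {t : K' → Term'}
    (hS : ∀ j, Represents I (S j) (t j)) :
    ∃ u, (∀ a ∈ o.guard, mapAtom (homOf (ptrVal t u)) a ∈ I) ∧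
      ∀ j, Represents I (S' j) (homOf (ptrVal t u) (o.newPtr j)) := by
  cases o with
  | skip =>
    cases ho
    exact ⟨auxVar, by simp [guard], by simpa [newPtr] using hS⟩
  | push k s =>
    cases ho
    obtain ⟨u, hedge, hu⟩ := (hS k).push htree s
    exact ⟨u, by simpa [guard, mapAtom] using hedge, represents_update hS hu⟩
  | isEmpty k =>
    simp only [apply, Option.ite_none_right_eq_some, Option.some.injEq] at ho
    obtain ⟨hk, rfl⟩ := ho
    have hroot := hS k
    rw [hk] at hroot
    exact ⟨auxVar, by simpa [guard, mapAtom] using hroot.1, by simpa [newPtr] using hS⟩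
  | top k s pop =>
    simp only [apply, Option.ite_none_right_eq_some, Option.some.injEq] at ho
    obtain ⟨hk, rfl⟩ := ho
    obtain ⟨w, hw⟩ : ∃ w, S k = s :: w := by
      cases h : S k <;> simp_all
    have hrep := hS k
    rw [hw] at hrep
    obtain ⟨-, u, hedge, hu⟩ := hrep
    refine ⟨u, by simpa [guard, mapAtom] using hedge, ?_⟩
    cases pop
    · simpa [newPtr] using hS
    · simpa [hw, newPtr] using represents_update hS hu

theorem exists_confAtom_mem_of_move {I : Set Atom} (hI : ∀ σ ∈ rules, satTGD I σ) {x : Ctrl}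
    {o : StackOp × Ctrl} (hx : x ∈ ctrls) (ho : o ∈ moves x) {S S' : K' → List Γ'}
    (happ : o.1.apply S = some S') {t : K' → Term'} (hS : ∀ j, Represents I (S j) (t j))
    (hc : confAtom x t ∈ I) :
    ∃ t', (∀ j, Represents I (S' j) (t' j)) ∧ confAtom o.2 t' ∈ I := by
  obtain ⟨u, hguard, hS'⟩ :=
    o.1.exists_guard_mem (fun s => hI _ (treeRule_mem_rules s)) happ hS
  refine ⟨_, hS', ?_⟩
  refine satTGD.mapAtom_head_mem (hI _ (moveRule_mem_rules hx ho)) (moveRule_head_vars x o)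
    (constPres_homOf (ptrVal t u)) ?_ _ (Finset.mem_singleton_self _)
  intro a ha
  rcases Finset.mem_insert.1 ha with rfl | ha
  · simpa using hc
  · exact hguard a ha

theorem exists_confAtom_mem_of_reaches {I : Set Atom} (hI : ∀ σ ∈ rules, satTGD I σ)
    {m m' : MicroCfg} (h : Reaches microStep m m') (hm : m.1.1 ∈ machineStmts)
    {t : K' → Term'} (hS : ∀ j, Represents I (m.2 j) (t j)) (hc : confAtom m.1 t ∈ I) :
    m'.1.1 ∈ machineStmts ∧
      ∃ t', (∀ j, Represents I (m'.2 j) (t' j)) ∧ confAtom m'.1 t' ∈ I := by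
  induction h with
  | refl => exact ⟨hm, t, hS, hc⟩
  | tail _ hstep ih =>
    obtain ⟨hq, t', hS', hc'⟩ := ih
    obtain ⟨o, ho, hy, happ⟩ := microStep_eq_some_iff.1 hstep
    rw [← hy]
    exact ⟨fst_mem_machineStmts_of_mem_moves hq ho,
      exists_confAtom_mem_of_move hI (mem_ctrls.2 hq) ho happ hS' hc'⟩

theorem halt_mem_of_reaches_halt {I : Set Atom} (hI : ∀ σ ∈ rules, satTGD I σ) {m : MicroCfg}
    {v : Option Γ'} {S' : K' → List Γ'} (h : Reaches microStep m ((.halt, v), S'))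
    (hm : m.1.1 ∈ machineStmts) {t : K' → Term'} (hS : ∀ j, Represents I (m.2 j) (t j))
    (hc : confAtom m.1 t ∈ I) :
    ((haltP, []) : Atom) ∈ I := by
  obtain ⟨hq, t', -, hc'⟩ := exists_confAtom_mem_of_reaches hI h hm hS hc
  obtain ⟨_, -, -, hhead⟩ := hI _ (haltRule_mem_rules (mem_ctrls.2 hq) rfl)
    (homOf (ptrVal t' auxVar)) (constPres_homOf _) (by simpa [haltRule] using hc')
  simpa [haltRule, mapAtom] using hhead

theorem halt_mem_cert_of_reaches_halt {e : ℕ}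
    (h : ∃ v S, Reaches microStep (initCfg e) ((.halt, v), S)) :
    [] ∈ cert haltQuery (database e).toFinset rules := by
  obtain ⟨v, S, h⟩ := h
  intro I hDI hI
  have hD : ∀ a ∈ database e, a ∈ I := fun a ha => hDI (by simpa using ha)
  have hS : ∀ j, Represents I ((initCfg e).2 j) (initPtr e j) := by
    intro j
    cases j
    · exact represents_chainWord hD le_rfl
    all_goals exact represents_chainWord hD (Nat.zero_le _)
  have hhalt := halt_mem_of_reaches_halt hI h (tr_mem_machineStmts initLabel_mem) hS
    (hD _ (by simp [database, initCfg]))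
  exact ⟨id, fun _ => rfl, by simpa [haltQuery, mapAtom] using hhalt, rfl⟩

/-! ### A model for non-halting runs -/

/-- The chain words are named by the database constants, all other words by nulls. -/
def wordTerm (w : List Γ') : Term' :=
  if w = chainWord w.length then Term'.cst w.length
  else Term'.nul (Encodable.encode (w.map symCode))

theorem wordTerm_chainWord (i : ℕ) : wordTerm (chainWord i) = Term'.cst i := by
  simp [wordTerm, length_chainWord]

theorem wordTerm_injective : Function.Injective wordTerm := by
  intro w w' h
  unfold wordTerm at h
  split_ifs at h with hw hw'
  · rw [hw, hw', Sum.inl.inj h]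
  · cases h
  · cases h
  · exact List.map_injective_iff.2 symCode_injective
      (Encodable.encode_injective (Sum.inl.inj (Sum.inr.inj h)))

inductive CanonicalAtom (e : ℕ) : Atom → Prop
  | root : CanonicalAtom e (rootP, [wordTerm []])
  | node (w : List Γ') : CanonicalAtom e (nodeP, [wordTerm w])
  | edge (s : Γ') (w : List Γ') : CanonicalAtom e (edgeP s, [wordTerm w, wordTerm (s :: w)])
  | conf (x : Ctrl) (S : K' → List Γ') (hx : x.1 ∈ machineStmts)
      (hreach : Reaches microStep (initCfg e) (x, S)) :
      CanonicalAtom e (confAtom x (wordTerm ∘ S))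

namespace CanonicalAtom

variable {e : ℕ}

theorem root_inv {l : List Term'} (h : CanonicalAtom e (rootP, l)) : l = [wordTerm []] := by
  generalize ha : ((rootP, l) : Atom) = a at h
  cases h <;> simp [confAtom, rootP, nodeP] at ha
  case root => exact ha
  case edge s _ => have := edgeP_mem_Icc s; grind
  case conf x _ _ _ => have := seven_le_ctrlPred x; grind

theorem node_inv {l : List Term'} (h : CanonicalAtom e (nodeP, l)) : ∃ w, l = [wordTerm w] := by
  generalize ha : ((nodeP, l) : Atom) = a at h
  cases h <;> simp [confAtom, rootP, nodeP] at ha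
  case node w => exact ⟨w, ha⟩
  case edge s _ => have := edgeP_mem_Icc s; grind
  case conf x _ _ _ => have := seven_le_ctrlPred x; grind

theorem edge_inv {s : Γ'} {l : List Term'} (h : CanonicalAtom e (edgeP s, l)) :
    ∃ w, l = [wordTerm w, wordTerm (s :: w)] := by
  generalize ha : ((edgeP s, l) : Atom) = a at h
  have hs := edgeP_mem_Icc s
  cases h <;> simp [confAtom, rootP, nodeP] at ha
  case edge s' w =>
    obtain ⟨hs', rfl⟩ := ha
    obtain rfl : s = s' := symCode_injective (by simpa [edgeP] using hs')
    exact ⟨w, rfl⟩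
  case conf x _ _ _ => have := seven_le_ctrlPred x; grind
  all_goals grind

theorem conf_inv {x : Ctrl} {t : K' → Term'} (hx : x ∈ ctrls)
    (h : CanonicalAtom e (confAtom x t)) :
    ∃ S, Reaches microStep (initCfg e) (x, S) ∧ ∀ j, t j = wordTerm (S j) := by
  generalize ha : confAtom x t = a at h
  cases h <;> simp [confAtom] at ha
  case conf y S hy hreach =>
    obtain ⟨hxy, h1, h2, h3, h4⟩ := ha
    obtain rfl := ctrlPred_injOn hx (mem_ctrls.2 hy) hxy
    exact ⟨S, hreach, fun j => by cases j <;> assumption⟩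

theorem not_halt {l : List Term'} : ¬ CanonicalAtom e (haltP, l) := by
  intro h
  generalize ha : ((haltP, l) : Atom) = a at h
  cases h <;> simp [confAtom, rootP, nodeP, haltP] at ha
  case edge s _ => have := edgeP_mem_Icc s; grind
  case conf x _ _ _ => have := seven_le_ctrlPred x; grind

end CanonicalAtom

theorem canonicalAtom_of_mem_database {e : ℕ} {a : Atom} (ha : a ∈ database e) :
    CanonicalAtom e a := by
  simp only [database, List.mem_cons, List.mem_flatMap, List.mem_range, List.not_mem_nil,
    or_false] at ha
  rcases ha with rfl | rfl | rfl | ⟨i, -, rfl | rfl⟩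
  · rw [← wordTerm_chainWord 0]
    exact .root
  · rw [← wordTerm_chainWord 0]
    exact .node _
  · have hptr : initPtr e = wordTerm ∘ (initCfg e).2 := by
      funext j
      cases j <;> exact (wordTerm_chainWord _).symm
    rw [hptr]
    exact .conf _ _ (tr_mem_machineStmts initLabel_mem) .refl
  · rw [← wordTerm_chainWord i, ← wordTerm_chainWord (i + 1)]
    exact .edge _ _
  · rw [← wordTerm_chainWord (i + 1)]
    exact .node _

theorem satTGD_canonical_treeRule (e : ℕ) (s : Γ') :
    satTGD {a | CanonicalAtom e a} (treeRule s) := by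
  intro h _ hbody
  obtain ⟨w, hw⟩ := CanonicalAtom.node_inv (hbody _ (Finset.mem_singleton_self _))
  simp only [List.map_cons, List.map_nil, List.cons.injEq, and_true] at hw
  refine ⟨homOf fun n => if n = 0 then wordTerm w else wordTerm (s :: w), constPres_homOf _,
    ?_, ?_⟩
  · rintro v ⟨a, ha, hv⟩
    simp only [treeRule, Finset.mem_singleton] at ha
    subst ha
    simp only [List.mem_singleton, Term'.var, Sum.inr.injEq] at hv
    subst hv
    simp [hw]
  · intro a ha
    simp only [treeRule, Finset.mem_insert, Finset.mem_singleton] at ha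
    rcases ha with rfl | rfl
    · exact CanonicalAtom.edge s w
    · exact CanonicalAtom.node (s :: w)

theorem homOf_update_eq {h : Term' → Term'} {S : K' → List Γ'} {k : K'} {w : List Γ'}
    (hptr : ∀ j, h (ptrVar j) = wordTerm (S j)) (haux : h auxVar = wordTerm w) (j : K') :
    h (Function.update ptrVar k auxVar j) = wordTerm (Function.update S k w j) := by
  rcases eq_or_ne j k with rfl | hj
  · simpa using haux
  · simpa [Function.update_of_ne hj] using hptr j

theorem StackOp.exists_apply_of_guard {e : ℕ} {o : StackOp} {h : Term' → Term'}
    {S : K' → List Γ'} (hptr : ∀ j, h (ptrVar j) = wordTerm (S j))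
    (hguard : ∀ a ∈ o.guard, CanonicalAtom e (mapAtom h a)) :
    ∃ S', o.apply S = some S' ∧ ∀ j, h (o.newPtr j) = wordTerm (S' j) := by
  cases o with
  | skip => exact ⟨S, rfl, hptr⟩
  | push k s =>
    obtain ⟨w, hw⟩ := CanonicalAtom.edge_inv (hguard _ (Finset.mem_singleton_self _))
    simp only [List.map_cons, List.map_nil, List.cons.injEq, and_true, hptr] at hw
    obtain ⟨hk, haux⟩ := hw
    obtain rfl := wordTerm_injective hk
    exact ⟨_, rfl, homOf_update_eq hptr haux⟩
  | isEmpty k =>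
    have hk := CanonicalAtom.root_inv (hguard _ (Finset.mem_singleton_self _))
    simp only [List.map_cons, List.map_nil, List.cons.injEq, and_true, hptr] at hk
    exact ⟨S, by simp [apply, wordTerm_injective hk], hptr⟩
  | top k s pop =>
    obtain ⟨w, hw⟩ := CanonicalAtom.edge_inv (hguard _ (Finset.mem_singleton_self _))
    simp only [List.map_cons, List.map_nil, List.cons.injEq, and_true, hptr] at hw
    obtain ⟨haux, hk⟩ := hw
    have hSk := wordTerm_injective hk
    cases pop
    · exact ⟨S, by simp [apply, hSk], hptr⟩
    · exact ⟨Function.update S k w, by simp [apply, hSk], homOf_update_eq hptr haux⟩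

theorem satTGD_canonical_moveRule {e : ℕ} {x : Ctrl} {o : StackOp × Ctrl} (hx : x ∈ ctrls)
    (ho : o ∈ moves x) : satTGD {a | CanonicalAtom e a} (moveRule x o) := by
  intro h hc hbody
  obtain ⟨S, hreach, hptr⟩ :=
    CanonicalAtom.conf_inv (t := h ∘ ptrVar) hx (hbody _ (Finset.mem_insert_self _ _))
  obtain ⟨S', happ, hnew⟩ :=
    o.1.exists_apply_of_guard hptr fun a ha => hbody a (Finset.mem_insert_of_mem ha)
  refine ⟨h, hc, fun _ _ => rfl, fun a ha => ?_⟩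
  simp only [moveRule, Finset.mem_singleton] at ha
  subst ha
  have hhead : mapAtom h (confAtom o.2 o.1.newPtr) = confAtom o.2 (wordTerm ∘ S') := by
    rw [mapAtom_confAtom]
    exact congrArg _ (funext hnew)
  show CanonicalAtom e _
  rw [hhead]
  exact .conf o.2 S' (fst_mem_machineStmts_of_mem_moves (mem_ctrls.1 hx) ho)
    (hreach.tail (microStep_eq_some_iff.2 ⟨o, ho, rfl, happ⟩))

theorem satTGD_canonical_rules {e : ℕ}
    (hnh : ¬ ∃ v S, Reaches microStep (initCfg e) ((.halt, v), S)) :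
    ∀ σ ∈ rules, satTGD {a | CanonicalAtom e a} σ := by
  intro σ hσ
  rcases mem_rules.1 hσ with ⟨s, rfl⟩ | ⟨x, hx, hhalt, rfl⟩ | ⟨x, hx, o, ho, rfl⟩
  · exact satTGD_canonical_treeRule e s
  · intro h _ hbody
    obtain ⟨S, hreach, -⟩ :=
      CanonicalAtom.conf_inv (t := h ∘ ptrVar) hx (hbody _ (Finset.mem_singleton_self _))
    obtain ⟨q, v⟩ := x
    cases hhalt
    exact absurd ⟨v, S, hreach⟩ hnh
  · exact satTGD_canonical_moveRule hx ho

/-! ### The reduction -/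

theorem halt_mem_cert_iff (e : ℕ) :
    [] ∈ cert haltQuery (database e).toFinset rules ↔
      ((Denumerable.ofNat Nat.Partrec.Code e).eval 0).Dom := by
  rw [← exists_reaches_halt_iff]
  refine ⟨fun h => ?_, halt_mem_cert_of_reaches_halt⟩
  by_contra hnh
  obtain ⟨_, -, hatoms, -⟩ := h {a | CanonicalAtom e a}
    (fun a ha => canonicalAtom_of_mem_database (by simpa using ha)) (satTGD_canonical_rules hnh)
  exact CanonicalAtom.not_halt (hatoms _ (Finset.mem_singleton_self _))

theorem halting_manyOneReducible :
    (fun c : Nat.Partrec.Code => (c.eval 0).Dom) ≤₀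
      fun l : List Atom => (∀ a ∈ l, isFact a) ∧ [] ∈ cert haltQuery l.toFinset rules :=
  ⟨fun c => database (Encodable.encode c), database_primrec.to_comp.comp Computable.encode,
    fun c => by
      beta_reduce
      rw [halt_mem_cert_iff, Denumerable.ofNat_encode]
      exact (and_iff_right (database_isFact _)).symm⟩

end PwlUndecidable

/-- There are a fixed piece-wise linear set `Σ` of TGDs and a fixed
Boolean CQ `q` such that it is undecidable, given a database `D` (encoded as a list
of facts), whether `() ∈ cert(q,D,Σ)`: CQ answering under piece-wise linear sets of
TGDs is undecidable in data complexity. -/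
theorem pwl_cq_answering_undecidable :
    ∃ (S : Finset TGD) (q : CQ), PWL S ∧ (∀ σ ∈ S, TGD.wf σ) ∧ CQ.wf q ∧
      q.output = [] ∧
      ¬ ComputablePred (fun l : List Atom =>
          (∀ a ∈ l, isFact a) ∧ [] ∈ cert q l.toFinset S) := by
  refine ⟨PwlUndecidable.rules, PwlUndecidable.haltQuery, PwlUndecidable.rules_pwl,
    PwlUndecidable.rules_wf, PwlUndecidable.haltQuery_wf, rfl, fun h => ?_⟩
  exact ComputablePred.halting_problem 0
    (ComputablePred.computable_of_manyOneReducible PwlUndecidable.halting_manyOneReducible h)
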